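/- Let ℓ₁ < ℓ₂ < ⋯ < ℓₙ be positive reals incommensurable over {−1,0,1}, L = Σℓⱼ, and T = {|ℓ·ζ| : ζ ∈ {1}×{±1}^{n−1}}. For 2 ≤ k ≤ n−1, define T̃ₖ = { ±(L − 2 Σ_{j<k} fⱼ ℓⱼ) : fⱼ ∈ {0,1} } and Tₖ = T \ T̃ₖ. Then max Tₖ = L − 2ℓₖ. -/
import Mathlib


open Finset

/-- `ℓ₁,…,ℓₙ` incommensurable over `{-1,0,1}`. -/
def Incommensurable {n : ℕ} (ℓ : Fin n → ℝ) : Prop :=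
  ∀ ζ : Fin n → ℝ, (∀ j, ζ j = -1 ∨ ζ j = 0 ∨ ζ j = 1) →
    (∑ j, ζ j * ℓ j) = 0 → ζ = 0

theorem stmt_13 (n : ℕ) (hn : 2 ≤ n) (ℓ : Fin n → ℝ)
    (hpos : ∀ j, 0 < ℓ j) (hmono : StrictMono ℓ) (hinc : Incommensurable ℓ)
    (L : ℝ) (hL : L = ∑ j, ℓ j)
    (T : Set ℝ)
    (hT : T = {t : ℝ | ∃ ζ : Fin n → ℝ,
      (∀ j, ζ j = 1 ∨ ζ j = -1) ∧ ζ ⟨0, by omega⟩ = 1 ∧ t = |∑ j, ζ j * ℓ j|})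
    -- `k` is a 0-based index with `1 ≤ k ≤ n-2`, i.e. `2 ≤ k+1 ≤ n-1` in the 1-based
    -- enumeration of the paper
    (k : Fin n) (hk1 : 1 ≤ (k : ℕ)) (hk2 : (k : ℕ) ≤ n - 2)
    (Ttilde : Set ℝ)
    (hTtilde : Ttilde = {x : ℝ | ∃ f : Fin n → ℝ,
      (∀ j, f j = 0 ∨ f j = 1) ∧ (∀ j : Fin n, ¬((j : ℕ) < (k : ℕ)) → f j = 0) ∧
      (x = L - 2 * ∑ j, f j * ℓ j ∨ x = -(L - 2 * ∑ j, f j * ℓ j))}) :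
    (L - 2 * ℓ k) ∈ T \ Ttilde ∧ ∀ t ∈ T \ Ttilde, t ≤ L - 2 * ℓ k := by
  subst hL hT hTtilde
  have h0n : (0:ℕ) < n := by omega
  set i0 : Fin n := ⟨0, h0n⟩ with hi0
  have hkne : i0 ≠ k := by
    intro h
    have : (k:ℕ) = 0 := by rw [← h]
    omega
  have hlast : (n-1 : ℕ) < n := by omega
  set iN : Fin n := ⟨n-1, hlast⟩ with hiN
  have hkN : k < iN := by
    rw [Fin.lt_def]
    simp only [hiN]
    omega
  have hkNne : iN ≠ k := (ne_of_lt hkN).symm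
  have hLpos : 0 < (∑ j, ℓ j) - 2 * ℓ k := by
    have h1 : ℓ k + ℓ iN ≤ ∑ j, ℓ j := by
      have := Finset.sum_le_sum_of_subset_of_nonneg
        (Finset.subset_univ ({k, iN} : Finset (Fin n))) (fun i _ _ => (hpos i).le)
      rwa [Finset.sum_pair (ne_of_lt hkN)] at this
    have h2 : ℓ k < ℓ iN := hmono hkN
    linarith
  -- a general support lemma
  have hsupp : ∀ h : Fin n → ℝ, (∀ j, h j = 0 ∨ h j = 1) →
      (∑ j, h j * ℓ j) < ℓ k → ∀ j : Fin n, ¬((j:ℕ) < (k:ℕ)) → h j = 0 := by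
    intro h h01 hlt j hj
    rcases h01 j with h0 | h1
    · exact h0
    · exfalso
      have hkj : ℓ k ≤ ℓ j := hmono.monotone (by rw [Fin.le_def]; omega)
      have : h j * ℓ j ≤ ∑ i, h i * ℓ i := by
        refine Finset.single_le_sum (f := fun i => h i * ℓ i) (fun i _ => ?_) (Finset.mem_univ j)
        rcases h01 i with h' | h' <;> simp [h', (hpos i).le]
      rw [h1, one_mul] at this
      linarith
  constructor
  · constructor
    · refine ⟨fun j => if j = k then -1 else 1, fun j => ?_, ?_, ?_⟩
      · by_cases h : j = k <;> simp [h]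
      · simp [hkne]
      · have hsum : ∑ j, (if j = k then (-1:ℝ) else 1) * ℓ j
            = (∑ j, ℓ j) - 2 * ℓ k := by
          have heq : ∀ j, (if j = k then (-1:ℝ) else 1) * ℓ j
              = ℓ j - (if j = k then 2 * ℓ k else 0) := by
            intro j; by_cases h : j = k <;> simp [h] <;> ring
          rw [Finset.sum_congr rfl (fun j _ => heq j), Finset.sum_sub_distrib,
            Finset.sum_ite_eq' Finset.univ k, if_pos (Finset.mem_univ k)]
        rw [hsum, abs_of_pos hLpos]
    · rintro ⟨f, hf01, hfs, hcase⟩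
      have hfk : f k = 0 := hfs k (lt_irrefl _)
      rcases hcase with hc | hc
      · have heq : ∑ j, f j * ℓ j - ℓ k = 0 := by linarith
        set ζ : Fin n → ℝ := fun j => f j + (if j = k then -1 else 0) with hζ
        have hζ01 : ∀ j, ζ j = -1 ∨ ζ j = 0 ∨ ζ j = 1 := by
          intro j
          by_cases h : j = k
          · left; simp [hζ, h, hfk]
          · rcases hf01 j with h' | h' <;> simp [hζ, h, h']
        have hζsum : ∑ j, ζ j * ℓ j = 0 := by
          have heq2 : ∀ j, ζ j * ℓ j = f j * ℓ j + (if j = k then -ℓ j else 0) := by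
            intro j; by_cases h : j = k <;> simp [hζ, h] <;> ring
          rw [Finset.sum_congr rfl (fun j _ => heq2 j), Finset.sum_add_distrib,
            Finset.sum_ite_eq' Finset.univ k, if_pos (Finset.mem_univ k)]
          linarith
        have := congrFun (hinc ζ hζ01 hζsum) k
        simp [hζ, hfk] at this
      · have heq : (∑ j, ℓ j) - ℓ k - ∑ j, f j * ℓ j = 0 := by linarith
        set ζ : Fin n → ℝ := fun j => 1 - f j + (if j = k then -1 else 0) with hζ
        have hζ01 : ∀ j, ζ j = -1 ∨ ζ j = 0 ∨ ζ j = 1 := by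
          intro j
          by_cases h : j = k
          · right; left; simp [hζ, h, hfk]
          · rcases hf01 j with h' | h' <;> simp [hζ, h, h']
        have hζsum : ∑ j, ζ j * ℓ j = 0 := by
          have heq2 : ∀ j, ζ j * ℓ j = ℓ j - f j * ℓ j + (if j = k then -ℓ j else 0) := by
            intro j; by_cases h : j = k <;> simp [hζ, h] <;> ring
          rw [Finset.sum_congr rfl (fun j _ => heq2 j), Finset.sum_add_distrib,
            Finset.sum_sub_distrib, Finset.sum_ite_eq' Finset.univ k,
            if_pos (Finset.mem_univ k)]
          linarith
        have := congrFun (hinc ζ hζ01 hζsum) iN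
        have hfN : f iN = 0 := hfs iN (by omega)
        simp [hζ, hkNne, hfN] at this
  · rintro t ⟨⟨ζ, hζ01, hζ0, hts⟩, htn⟩
    by_contra hgt
    push_neg at hgt
    set f : Fin n → ℝ := fun j => (1 - ζ j) / 2 with hf
    have hf01 : ∀ j, f j = 0 ∨ f j = 1 := by
      intro j; rcases hζ01 j with h | h <;> simp [hf, h] <;> norm_num
    have hsum : ∑ j, ζ j * ℓ j = (∑ j, ℓ j) - 2 * ∑ j, f j * ℓ j := by
      rw [Finset.mul_sum, ← Finset.sum_sub_distrib]
      refine Finset.sum_congr rfl (fun j _ => ?_)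
      simp only [hf]; ring
    rcases abs_cases (∑ j, ζ j * ℓ j) with ⟨habs, hsgn⟩ | ⟨habs, hsgn⟩
    · -- nonnegative case: t = L - 2 ∑ f ℓ
      have ht : t = (∑ j, ℓ j) - 2 * ∑ j, f j * ℓ j := by
        rw [hts, habs, hsum]
      have hlt : ∑ j, f j * ℓ j < ℓ k := by
        rw [ht] at hgt; linarith
      exact htn ⟨f, hf01, hsupp f hf01 hlt, Or.inl ht⟩
    · -- negative case: use g = 1 - f
      set g : Fin n → ℝ := fun j => 1 - f j with hg
      have hg01 : ∀ j, g j = 0 ∨ g j = 1 := by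
        intro j; rcases hf01 j with h | h <;> simp [hg, h]
      have hgsum : ∑ j, g j * ℓ j = (∑ j, ℓ j) - ∑ j, f j * ℓ j := by
        rw [← Finset.sum_sub_distrib]
        refine Finset.sum_congr rfl (fun j _ => ?_)
        simp only [hg]; ring
      have ht : t = (∑ j, ℓ j) - 2 * ∑ j, g j * ℓ j := by
        rw [hts, habs, hsum, hgsum]; ring
      have hlt : ∑ j, g j * ℓ j < ℓ k := by
        rw [ht] at hgt; linarith
      exact htn ⟨g, hg01, hsupp g hg01 hlt, Or.inl ht⟩
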